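/- arXiv:2105.08805 — 3 statements merged into one kernel-verified Lean document; each statement's English description precedes it below -/
import Mathlib

section
/- Under the hypotheses of the continued fraction setup (all partial quotients a_l of absolute value at least 2 and the same sign, b_l the truncated continued fraction values, c_l = b_1···b_l), one has |c_l| ≥ |c_{l-1}| + 1 for every l ≥ 1 (with c_0 = 1). In particular the sequence |c_l| is strictly increasing and |c_l| ≥ l + 1. -/
/-- With continued fraction data as in the paper (all partial quotients `|a_l| ≥ 2` of the
same sign, `b_l` the truncated continued fraction values, `c_0 = 1`, `c_l = b_1 ⋯ b_l`),
one has `|c_l| ≥ |c_{l-1}| + 1` for every `1 ≤ l ≤ ζ`; in particular `|c_l|` is strictly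
increasing and `|c_l| ≥ l + 1`. -/
theorem stmt1 (ζ : ℕ) (hζ : 1 ≤ ζ) (a : ℕ → ℤ)
    (ha : (∀ l, 1 ≤ l → l ≤ ζ → 2 ≤ a l) ∨ (∀ l, 1 ≤ l → l ≤ ζ → a l ≤ -2))
    (b c : ℕ → ℝ)
    (hb1 : b 1 = (a 1 : ℝ))
    (hbl : ∀ l, 2 ≤ l → l ≤ ζ → b l = (a l : ℝ) - 1 / b (l - 1))
    (hc0 : c 0 = 1)
    (hcl : ∀ l, 1 ≤ l → l ≤ ζ → c l = c (l - 1) * b l) :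
    (∀ l, 1 ≤ l → l ≤ ζ → |c (l - 1)| + 1 ≤ |c l|) ∧
    (∀ l, 1 ≤ l → l ≤ ζ → (l : ℝ) + 1 ≤ |c l|) := by
  have habs : ∀ l, 1 ≤ l → l ≤ ζ → (2 : ℝ) ≤ |(a l : ℝ)| := by
    intro l h1 h2
    rcases ha with h | h
    · have h' := h l h1 h2
      calc (2 : ℝ) ≤ (a l : ℝ) := by exact_mod_cast h'
        _ ≤ |(a l : ℝ)| := le_abs_self _
    · have h' := h l h1 h2
      calc (2 : ℝ) ≤ -(a l : ℝ) := by
            have : (a l : ℝ) ≤ -2 := by exact_mod_cast h'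
            linarith
        _ ≤ |(a l : ℝ)| := neg_le_abs _
  have key : ∀ l, 1 ≤ l → l ≤ ζ → 1 < |b l| ∧ |c (l - 1)| + 1 ≤ |c l| := by
    intro l hl
    induction l, hl using Nat.le_induction with
    | base =>
      intro h1ζ
      have hb : 1 < |b 1| := by
        rw [hb1]; linarith [habs 1 le_rfl h1ζ]
      refine ⟨hb, ?_⟩
      have hc1 : c 1 = b 1 := by
        rw [hcl 1 le_rfl h1ζ]; simp [hc0]
      simp only [Nat.sub_self, hc0, hc1, abs_one, hb1]
      linarith [habs 1 le_rfl h1ζ]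
    | succ l hl ih =>
      intro hlζ
      have hlζ' : l ≤ ζ := le_trans (Nat.le_succ l) hlζ
      obtain ⟨hb', hc'⟩ := ih hlζ'
      have hbne : b l ≠ 0 := by
        intro h; rw [h, abs_zero] at hb'; linarith
      have hbsucc : b (l + 1) = (a (l + 1) : ℝ) - 1 / b l := by
        have := hbl (l + 1) (by omega) hlζ
        simpa using this
      have hinv : |1 / b l| < 1 := by
        rw [abs_div, abs_one, div_lt_one (by linarith)]
        exact hb'
      have ha2 : (2 : ℝ) ≤ |(a (l + 1) : ℝ)| := habs (l + 1) (by omega) hlζ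
      have hbgt : 1 < |b (l + 1)| := by
        rw [hbsucc]
        calc (1 : ℝ) < |(a (l + 1) : ℝ)| - |1 / b l| := by linarith
          _ ≤ |(a (l + 1) : ℝ) - 1 / b l| := by
              exact le_trans (le_refl _) (abs_sub_abs_le_abs_sub _ _)
      refine ⟨hbgt, ?_⟩
      have hcrec : c l = c (l - 1) * b l := hcl l (by omega) hlζ'
      have hcsucc : c (l + 1) = c l * b (l + 1) := by
        have := hcl (l + 1) (by omega) hlζ
        simpa [mul_comm] using this
      have hdiv : c l / b l = c (l - 1) := by
        rw [hcrec]; field_simp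
      have hkey : c (l + 1) = c l * (a (l + 1) : ℝ) - c (l - 1) := by
        rw [hcsucc, hbsucc, mul_sub, mul_one_div, hdiv]
      have h1 : |c l| * 2 ≤ |c l| * |(a (l + 1) : ℝ)| := by
        apply mul_le_mul_of_nonneg_left ha2 (abs_nonneg _)
      have h2 : |c l * (a (l + 1) : ℝ)| - |c (l - 1)| ≤ |c (l + 1)| := by
        rw [hkey]
        exact le_trans (abs_sub_abs_le_abs_sub _ _) (le_refl _)
      rw [abs_mul] at h2
      have : |c l| + 1 ≤ |c (l + 1)| := by nlinarith
      simpa using this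
  constructor
  · intro l h1 h2; exact (key l h1 h2).2
  · intro l h1
    induction l, h1 using Nat.le_induction with
    | base =>
      intro h1ζ
      have := (key 1 le_rfl h1ζ).2
      simp only [Nat.sub_self, hc0, abs_one] at this
      push_cast
      linarith
    | succ l hl ih =>
      intro hlζ
      have hlζ' : l ≤ ζ := le_trans (Nat.le_succ l) hlζ
      have h1 := ih hlζ'
      have h2 := (key (l + 1) (by omega) hlζ).2
      simp only [Nat.add_sub_cancel] at h2
      push_cast
      linarith
end

section
/- For every real θ with 0 ≤ θ ≤ π, the dilogarithm evaluated on the unit circle satisfies Li₂(e^{2iθ}) = π²/6 + θ(θ − π) + 2i·Λ(θ), where Λ(θ) = −∫₀^θ log|2 sin t| dt is the Lobachevsky function. -/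
open Complex

/-- The dilogarithm `Li₂(z) = -∫₀^z log(1-u)/u du`, parametrized along the straight
segment from `0` to `z`. -/
noncomputable def Li2 (z : ℂ) : ℂ := -∫ t in (0:ℝ)..1, Complex.log (1 - t * z) / t

/-- The Lobachevsky function `Λ(θ) = -∫₀^θ log|2 sin t| dt`. -/
noncomputable def Lob (θ : ℝ) : ℝ := -∫ t in (0:ℝ)..θ, Real.log |2 * Real.sin t|

section Aux
open MeasureTheory Set Real

lemma continuous_zz : Continuous fun θ : ℝ => Complex.exp (2 * I * (θ:ℝ)) :=
  Complex.continuous_exp.comp (continuous_const.mul Complex.continuous_ofReal)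

noncomputable def zz (θ : ℝ) : ℂ := Complex.exp (2 * I * (θ:ℝ))

lemma zz_eq (θ : ℝ) : zz θ = (Real.cos (2*θ) : ℝ) + (Real.sin (2*θ) : ℝ) * I := by
  rw [zz, show (2 * I * (θ:ℂ)) = ((2*θ:ℝ):ℂ) * I by push_cast; ring, Complex.exp_mul_I,
    Complex.ofReal_cos, Complex.ofReal_sin]

lemma zz_re (θ : ℝ) : (zz θ).re = Real.cos (2*θ) := by
  rw [zz_eq]; simp only [Complex.add_re, Complex.ofReal_re, Complex.mul_re, Complex.ofReal_im,
    Complex.I_re, Complex.I_im]; ring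

lemma zz_im (θ : ℝ) : (zz θ).im = Real.sin (2*θ) := by
  rw [zz_eq]; simp only [Complex.add_im, Complex.ofReal_im, Complex.mul_im, Complex.ofReal_re,
    Complex.I_re, Complex.I_im]; ring

lemma zz_abs (θ : ℝ) : ‖zz θ‖ = 1 := by
  rw [zz, show (2 * I * (θ:ℂ)) = ((2*θ:ℝ):ℂ) * I by push_cast; ring]
  exact Complex.norm_exp_ofReal_mul_I _

lemma w_re (θ t : ℝ) : (1 - (t:ℂ) * zz θ).re = 1 - t * Real.cos (2*θ) := by
  simp only [Complex.sub_re, Complex.one_re, Complex.mul_re, Complex.ofReal_re,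
    Complex.ofReal_im, zz_re, zz_im]; ring

lemma repos {θ t : ℝ} (hθ : θ ∈ Ioo 0 π) (ht : t ∈ Icc (0:ℝ) 1) :
    0 < (1 - (t:ℂ) * zz θ).re := by
  rw [w_re]
  have hc1 : Real.cos (2*θ) < 1 := by
    rcases lt_or_eq_of_le (Real.cos_le_one (2*θ)) with h | h
    · exact h
    · exfalso
      have := (Real.cos_eq_one_iff_of_lt_of_lt (by nlinarith [hθ.1, hθ.2, Real.pi_pos])
        (by nlinarith [hθ.2, Real.pi_pos])).1 h
      nlinarith [hθ.1]
  rcases le_or_gt (Real.cos (2*θ)) 0 with h | h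
  · nlinarith [ht.1, ht.2]
  · nlinarith [ht.1, ht.2]

lemma wslit {θ t : ℝ} (hθ : θ ∈ Ioo 0 π) (ht : t ∈ Icc (0:ℝ) 1) :
    (1 - (t:ℂ) * zz θ) ∈ Complex.slitPlane :=
  Complex.mem_slitPlane_iff.2 (Or.inl (repos hθ ht))

lemma norm_clog_le (z : ℂ) : ‖Complex.log z‖ ≤ |Real.log ‖z‖| + π := by
  calc ‖Complex.log z‖ ≤ |(Complex.log z).re| + |(Complex.log z).im| :=
        Complex.norm_le_abs_re_add_abs_im _
    _ ≤ |Real.log ‖z‖| + π := by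
        rw [Complex.log_re, Complex.log_im]
        exact add_le_add le_rfl (Complex.abs_arg_le_pi z)

noncomputable def boundFn (t : ℝ) : ℝ :=
  if t ≤ 1/2 then 3 else 2*(π + Real.log 2 - Real.log (1-t))

lemma bound_pt (θ : ℝ) {t : ℝ} (ht : t ∈ Ioo (0:ℝ) 1) :
    ‖Complex.log (1 - (t:ℂ) * zz θ) / t‖ ≤ boundFn t := by
  have ht0 := ht.1
  have ht1 := ht.2
  have habs : ‖(t:ℂ) * zz θ‖ = t := by
    rw [norm_mul, zz_abs, Complex.norm_real, Real.norm_eq_abs,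
      abs_of_pos ht0, mul_one]
  have hnorm_div : ‖Complex.log (1 - (t:ℂ) * zz θ) / t‖
      = ‖Complex.log (1 - (t:ℂ) * zz θ)‖ / t := by
    rw [norm_div, Complex.norm_real, Real.norm_eq_abs, abs_of_pos ht0]
  rw [hnorm_div, boundFn]
  split_ifs with h
  · -- small t : use norm_log_one_add_half_le_self
    have h2 : ‖Complex.log (1 - (t:ℂ) * zz θ)‖ ≤ 3/2 * t := by
      have : ‖Complex.log (1 + (-((t:ℂ) * zz θ)))‖ ≤ 3/2 * ‖-((t:ℂ) * zz θ)‖ :=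
        Complex.norm_log_one_add_half_le_self (by rw [norm_neg, habs]; exact h)
      rw [norm_neg, habs, ← sub_eq_add_neg] at this
      exact this
    rw [div_le_iff₀ ht0]
    nlinarith
  · push_neg at h
    have hlow : 1 - t ≤ ‖1 - (t:ℂ) * zz θ‖ := by
      have := norm_sub_norm_le (1:ℂ) ((t:ℂ) * zz θ)
      rw [habs, norm_one] at this
      exact this
    have hhigh : ‖1 - (t:ℂ) * zz θ‖ ≤ 2 := by
      have := norm_sub_le (1:ℂ) ((t:ℂ) * zz θ)
      rw [habs, norm_one] at this
      linarith
    have hlog1t : Real.log (1-t) ≤ 0 := Real.log_nonpos (by linarith) (by linarith)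
    have hpos : (0:ℝ) < ‖1 - (t:ℂ) * zz θ‖ := lt_of_lt_of_le (by linarith) hlow
    have hA : |Real.log ‖1 - (t:ℂ) * zz θ‖| ≤ Real.log 2 - Real.log (1-t) := by
      rw [abs_le]
      constructor
      · have h3 := Real.log_le_log (by linarith : (0:ℝ) < 1 - t) hlow
        have h4 : (0:ℝ) ≤ Real.log 2 := Real.log_nonneg (by norm_num)
        linarith
      · have h3 := Real.log_le_log hpos hhigh
        linarith
    have hB := norm_clog_le (1 - (t:ℂ) * zz θ)
    rw [div_le_iff₀ ht0]
    have hbig : ‖Complex.log (1 - (t:ℂ) * zz θ)‖ ≤ Real.log 2 - Real.log (1-t) + π := by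
      linarith
    have hπ : (0:ℝ) < π := Real.pi_pos
    nlinarith [Real.log_nonneg (show (1:ℝ) ≤ 2 by norm_num)]

lemma log_intervalIntegrable_zero {b : ℝ} (hb : 0 < b) :
    IntervalIntegrable Real.log volume 0 b := by
  have h1 : IntervalIntegrable Real.log volume 0 1 := by
    rw [intervalIntegrable_iff_integrableOn_Ioc_of_le zero_le_one]
    have key : IntegrableOn (fun x : ℝ => -Real.log x) (Ioc (0:ℝ) 1) volume := by
      apply intervalIntegral.integrableOn_deriv_of_nonneg
        (g := fun x : ℝ => x - x * Real.log x)
      · exact (continuous_id.sub Real.continuous_mul_log).continuousOn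
      · intro x hx
        have h := Real.hasDerivAt_mul_log (ne_of_gt hx.1)
        have := (hasDerivAt_id x).sub h
        exact this.congr_deriv (by ring)
      · intro x hx
        have := Real.log_nonpos (le_of_lt hx.1) (le_of_lt hx.2)
        linarith
    exact key.neg.congr (Filter.Eventually.of_forall (fun x => by simp))
  rcases le_total b 1 with h | h
  · exact h1.mono_set (by rw [uIcc_of_le (le_of_lt hb), uIcc_of_le zero_le_one]; exact Icc_subset_Icc le_rfl h)
  · exact h1.trans (intervalIntegral.intervalIntegrable_log (by
      rw [uIcc_of_le h]
      rintro ⟨h0, -⟩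
      linarith))

lemma log_one_sub_intervalIntegrable : IntervalIntegrable (fun t => Real.log (1 - t)) volume 0 1 := by
  have := ((log_intervalIntegrable_zero one_pos).comp_sub_left 1).symm
  simpa using this

lemma boundFn_integrableOn : IntegrableOn boundFn (Ioc (0:ℝ) 1) volume := by
  have hmeas : Measurable boundFn := by
    apply Measurable.ite (measurableSet_Iic) measurable_const
    apply Measurable.const_mul
    exact (measurable_const.sub (Real.measurable_log.comp (measurable_const.sub measurable_id)))
  have hmaj : IntegrableOn (fun t : ℝ => 3 + 2*(π + Real.log 2) + 2 * |Real.log (1-t)|)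
      (Ioc (0:ℝ) 1) volume := by
    apply Integrable.add (integrable_const _)
    have : IntegrableOn (fun t : ℝ => Real.log (1-t)) (Ioc (0:ℝ) 1) volume := by
      rw [← intervalIntegrable_iff_integrableOn_Ioc_of_le zero_le_one]
      exact log_one_sub_intervalIntegrable
    simpa using (this.abs.const_mul 2)
  apply hmaj.mono' (hmeas.aestronglyMeasurable)
  filter_upwards [ae_restrict_mem measurableSet_Ioc] with t ht
  rw [Real.norm_eq_abs, boundFn]
  have hlog1t : Real.log (1-t) ≤ 0 := Real.log_nonpos (by linarith [ht.2]) (by linarith [ht.1])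
  have hπ : (0:ℝ) < π := Real.pi_pos
  have hl2 : (0:ℝ) ≤ Real.log 2 := Real.log_nonneg (by norm_num)
  split_ifs with h
  · rw [_root_.abs_of_nonneg (by norm_num : (0:ℝ) ≤ 3)]
    have := abs_nonneg (Real.log (1-t))
    linarith
  · rw [_root_.abs_of_nonneg (by nlinarith : (0:ℝ) ≤ 2 * (π + Real.log 2 - Real.log (1 - t)))]
    have := le_abs_self (-Real.log (1-t))
    rw [abs_neg] at this
    nlinarith

lemma F_meas (θ : ℝ) : AEStronglyMeasurable (fun t : ℝ => Complex.log (1 - (t:ℂ) * zz θ) / t)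
    (volume.restrict (Ioc (0:ℝ) 1)) := by
  apply Measurable.aestronglyMeasurable
  apply Measurable.div
  · exact Complex.measurable_log.comp ((measurable_const.sub
      ((Complex.measurable_ofReal.comp measurable_id).mul_const _)))
  · exact Complex.measurable_ofReal

lemma restrict_Ioc_eq_Ioo : (volume : Measure ℝ).restrict (Ioc (0:ℝ) 1)
    = volume.restrict (Ioo (0:ℝ) 1) :=
  (Measure.restrict_congr_set Ioo_ae_eq_Ioc).symm

lemma cont_f : Continuous (fun θ : ℝ => Li2 (zz θ)) := by
  have : (fun θ : ℝ => Li2 (zz θ))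
      = fun θ => -∫ t in Ioc (0:ℝ) 1, Complex.log (1 - (t:ℂ) * zz θ) / t := by
    funext θ
    rw [Li2, intervalIntegral.integral_of_le zero_le_one]
  rw [this]
  apply Continuous.neg
  apply continuous_of_dominated (bound := boundFn)
  · exact fun θ => F_meas θ
  · intro θ
    rw [restrict_Ioc_eq_Ioo]
    filter_upwards [ae_restrict_mem measurableSet_Ioo] with t ht
    exact bound_pt θ ht
  · exact boundFn_integrableOn
  · rw [restrict_Ioc_eq_Ioo]
    filter_upwards [ae_restrict_mem measurableSet_Ioo] with t ht
    apply Continuous.div_const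
    apply continuous_iff_continuousAt.2
    intro θ
    apply ContinuousAt.clog
    · exact (continuous_const.sub (continuous_const.mul continuous_zz)).continuousAt
    · apply Complex.mem_slitPlane_iff.2
      left
      rw [w_re]
      have := Real.neg_one_le_cos (2*θ)
      have h1 := Real.cos_le_one (2*θ)
      nlinarith [ht.1, ht.2]

lemma sin_lb {a θ : ℝ} (ha : 0 < a) (h : a ≤ θ) (h' : θ ≤ π - a) : Real.sin a ≤ Real.sin θ := by
  have ha2 : a ≤ π/2 := by linarith
  have hmono := Real.strictMonoOn_sin.monotoneOn
  rcases le_or_gt θ (π/2) with h2 | h2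
  · exact hmono ⟨by linarith, ha2⟩ ⟨by linarith, h2⟩ h
  · rw [← Real.sin_pi_sub θ]
    exact hmono ⟨by linarith, ha2⟩ ⟨by linarith, by linarith⟩ (by linarith)

lemma norm_w_lb {a θ t : ℝ} (ha : 0 < a) (h : a ≤ θ) (h' : θ ≤ π - a) (ht : t ∈ Icc (0:ℝ) 1) :
    min 1 (2 * Real.sin a ^ 2) ≤ ‖1 - (t:ℂ) * zz θ‖ := by
  have hθ : θ ∈ Ioo 0 π := ⟨by linarith, by linarith⟩
  have hre : min 1 (2 * Real.sin a ^ 2) ≤ (1 - (t:ℂ) * zz θ).re := by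
    rw [w_re]
    rcases le_or_gt (Real.cos (2*θ)) 0 with h3 | h3
    · have : 1 - t * Real.cos (2*θ) ≥ 1 := by nlinarith [ht.1, ht.2]
      exact le_trans (min_le_left _ _) this
    · have hcos2 : Real.cos (2*θ) = 1 - 2 * Real.sin θ ^ 2 := by
        rw [two_mul, Real.cos_add]
        nlinarith [Real.sin_sq_add_cos_sq θ]
      have hs : Real.sin a ≤ Real.sin θ := sin_lb ha h h'
      have hsa : 0 < Real.sin a := Real.sin_pos_of_pos_of_lt_pi ha (by linarith)
      have : 2 * Real.sin a ^ 2 ≤ 1 - t * Real.cos (2*θ) := by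
        nlinarith [ht.1, ht.2]
      exact le_trans (min_le_right _ _) this
  calc min 1 (2 * Real.sin a ^ 2) ≤ (1 - (t:ℂ) * zz θ).re := hre
    _ ≤ ‖1 - (t:ℂ) * zz θ‖ := Complex.re_le_norm _

lemma hasDerivAt_zz (θ : ℝ) : HasDerivAt (fun θ : ℝ => zz θ) (2 * I * zz θ) θ := by
  have h : HasDerivAt (fun z : ℂ => Complex.exp (2 * I * z)) (2 * I * Complex.exp (2 * I * θ)) θ := by
    have := ((hasDerivAt_id (θ:ℂ)).const_mul (2*I)).cexp
    simpa [mul_comm] using this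
  exact h.comp_ofReal

lemma hasDerivAt_F {t : ℝ} (ht : t ∈ Ioc (0:ℝ) 1) {θ : ℝ} (hθ : θ ∈ Ioo 0 π) :
    HasDerivAt (fun θ : ℝ => Complex.log (1 - (t:ℂ) * zz θ) / t)
      (-2 * I * zz θ / (1 - (t:ℂ) * zz θ)) θ := by
  have hslit := wslit hθ ⟨le_of_lt ht.1, ht.2⟩
  have h1 : HasDerivAt (fun θ : ℝ => 1 - (t:ℂ) * zz θ) (-((t:ℂ) * (2 * I * zz θ))) θ := by
    have h := ((hasDerivAt_const θ (1:ℂ)).sub ((hasDerivAt_zz θ).const_mul (t:ℂ)) :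
      HasDerivAt (fun θ : ℝ => 1 - (t:ℂ) * zz θ) (0 - (t:ℂ) * (2 * I * zz θ)) θ)
    rwa [zero_sub] at h
  have h2 := (h1.clog_real hslit).div_const (t:ℂ)
  have htne : (t:ℂ) ≠ 0 := Complex.ofReal_ne_zero.2 (ne_of_gt ht.1)
  have hwne : (1 - (t:ℂ) * zz θ) ≠ 0 := Complex.slitPlane_ne_zero hslit
  exact h2.congr_deriv (by field_simp)

lemma F_int (θ : ℝ) : IntervalIntegrable (fun t : ℝ => Complex.log (1 - (t:ℂ) * zz θ) / t)
    volume 0 1 := by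
  rw [intervalIntegrable_iff_integrableOn_Ioc_of_le zero_le_one]
  apply boundFn_integrableOn.mono' (F_meas θ)
  rw [restrict_Ioc_eq_Ioo]
  filter_upwards [ae_restrict_mem measurableSet_Ioo] with t ht
  exact bound_pt θ ht

lemma integral_F' {θ : ℝ} (hθ : θ ∈ Ioo 0 π) :
    ∫ t in (0:ℝ)..1, -2 * I * zz θ / (1 - (t:ℂ) * zz θ)
      = 2 * I * Complex.log (1 - zz θ) := by
  have key : ∀ t ∈ uIcc (0:ℝ) 1,
      HasDerivAt (fun t : ℝ => 2 * I * Complex.log (1 - (t:ℂ) * zz θ))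
        (-2 * I * zz θ / (1 - (t:ℂ) * zz θ)) t := by
    intro t ht
    rw [uIcc_of_le zero_le_one] at ht
    have hslit := wslit hθ ht
    have h1 : HasDerivAt (fun t : ℝ => 1 - (t:ℂ) * zz θ) (-zz θ) t := by
      have hc : HasDerivAt (fun w : ℂ => 1 - w * zz θ) (-zz θ) (t:ℂ) := by
        have h := ((hasDerivAt_const (t:ℂ) (1:ℂ)).sub ((hasDerivAt_id (t:ℂ)).mul_const (zz θ)) :
          HasDerivAt (fun w : ℂ => 1 - w * zz θ) (0 - 1 * zz θ) (t:ℂ))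
        rwa [one_mul, zero_sub] at h
      exact hc.comp_ofReal
    have h2 := (h1.clog_real hslit).const_mul (2*I)
    exact h2.congr_deriv (by ring)
  have hcont : IntervalIntegrable (fun t : ℝ => -2 * I * zz θ / (1 - (t:ℂ) * zz θ)) volume 0 1 := by
    apply ContinuousOn.intervalIntegrable
    apply ContinuousOn.div continuous_const.continuousOn
    · exact (continuous_const.sub ((Complex.continuous_ofReal.mul continuous_const))).continuousOn
    · intro t ht
      rw [uIcc_of_le zero_le_one] at ht
      exact Complex.slitPlane_ne_zero (wslit hθ ht)
  rw [intervalIntegral.integral_eq_sub_of_hasDerivAt key hcont]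
  simp [Complex.log_one]

lemma hasDerivAt_f {θ₀ : ℝ} (hθ₀ : θ₀ ∈ Ioo 0 π) :
    HasDerivAt (fun θ : ℝ => Li2 (zz θ)) (-2 * I * Complex.log (1 - zz θ₀)) θ₀ := by
  set ε := min θ₀ (π - θ₀) / 2 with hε
  have hεpos : 0 < ε := by
    have := hθ₀.1; have := hθ₀.2
    apply div_pos (lt_min (by linarith) (by linarith)) two_pos
  have hball : ∀ θ ∈ Metric.ball θ₀ ε, ε ≤ θ ∧ θ ≤ π - ε := by
    intro θ hθ
    rw [Metric.mem_ball, Real.dist_eq, abs_lt] at hθ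
    have h1 : min θ₀ (π - θ₀) ≤ θ₀ := min_le_left _ _
    have h2 : min θ₀ (π - θ₀) ≤ π - θ₀ := min_le_right _ _
    constructor <;> [linarith [hθ.1]; linarith [hθ.2]]
  have hballIoo : ∀ θ ∈ Metric.ball θ₀ ε, θ ∈ Ioo 0 π := by
    intro θ hθ
    obtain ⟨h1, h2⟩ := hball θ hθ
    exact ⟨by linarith, by linarith⟩
  set c := min 1 (2 * Real.sin ε ^ 2) with hc
  have hcpos : 0 < c := by
    apply lt_min one_pos
    have : 0 < Real.sin ε := Real.sin_pos_of_pos_of_lt_pi hεpos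
      (by nlinarith [hθ₀.1, hθ₀.2, Real.pi_pos, min_le_left θ₀ (π - θ₀), min_le_right θ₀ (π - θ₀)])
    positivity
  have main := (intervalIntegral.hasDerivAt_integral_of_dominated_loc_of_deriv_le
    (F := fun θ t => Complex.log (1 - (t:ℂ) * zz θ) / t)
    (F' := fun θ t => -2 * I * zz θ / (1 - (t:ℂ) * zz θ))
    (x₀ := θ₀) (a := 0) (b := 1) (bound := fun _ => 2 / c) (Metric.ball_mem_nhds θ₀ hεpos)
    (Filter.Eventually.of_forall (fun θ => by
      rw [uIoc_of_le zero_le_one]; exact F_meas θ))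
    (F_int θ₀)
    (by
      rw [uIoc_of_le zero_le_one]
      apply Measurable.aestronglyMeasurable
      exact (measurable_const.div ((measurable_const.sub
        ((Complex.measurable_ofReal.comp measurable_id).mul_const _))))
      )
    (Filter.Eventually.of_forall (fun t ht θ hθ => by
      rw [uIoc_of_le zero_le_one] at ht
      obtain ⟨ha, hb⟩ := hball θ hθ
      have hlb := norm_w_lb hεpos ha hb ⟨le_of_lt ht.1, ht.2⟩
      have hwpos : 0 < ‖1 - (t:ℂ) * zz θ‖ := lt_of_lt_of_le hcpos hlb
      rw [norm_div]
      have hnum : ‖-2 * I * zz θ‖ = 2 := by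
        rw [norm_mul, norm_mul]
        simp [zz_abs]
      rw [hnum]
      exact div_le_div_of_nonneg_left (by norm_num) hcpos hlb))
    (intervalIntegrable_const)
    (Filter.Eventually.of_forall (fun t ht θ hθ => by
      rw [uIoc_of_le zero_le_one] at ht
      exact hasDerivAt_F ht (hballIoo θ hθ)))).2
  rw [integral_F' hθ₀] at main
  have : (fun θ : ℝ => Li2 (zz θ))
      = fun θ => -∫ t in (0:ℝ)..1, Complex.log (1 - (t:ℂ) * zz θ) / t := rfl
  rw [this]
  have := main.neg
  exact this.congr_deriv (by ring)

lemma log_polar {θ : ℝ} (hθ : θ ∈ Ioo 0 π) :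
    Complex.log (1 - zz θ)
      = (Real.log (2 * Real.sin θ) : ℝ) + ((θ - π/2 : ℝ) : ℂ) * I := by
  have hsin : 0 < Real.sin θ := Real.sin_pos_of_pos_of_lt_pi hθ.1 hθ.2
  have hfac : 1 - zz θ = ((2 * Real.sin θ : ℝ) : ℂ)
      * (Complex.cos ((θ - π/2 : ℝ) : ℂ) + Complex.sin ((θ - π/2 : ℝ) : ℂ) * I) := by
    rw [zz_eq, ← Complex.ofReal_cos, ← Complex.ofReal_sin]
    apply Complex.ext
    · simp only [Complex.sub_re, Complex.one_re, Complex.add_re, Complex.ofReal_re,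
        Complex.mul_re, Complex.mul_im, Complex.ofReal_im, Complex.I_re, Complex.I_im,
        Complex.add_im]
      have h1 : Real.cos (θ - π/2) = Real.sin θ := by
        rw [show θ - π/2 = -(π/2 - θ) by ring, Real.cos_neg, Real.cos_pi_div_two_sub]
      have h2 : Real.cos (2*θ) = 1 - 2 * Real.sin θ ^ 2 := by
        rw [two_mul, Real.cos_add]; nlinarith [Real.sin_sq_add_cos_sq θ]
      rw [h1, h2]; ring
    · simp only [Complex.sub_im, Complex.one_im, Complex.add_im, Complex.ofReal_im,
        Complex.mul_im, Complex.mul_re, Complex.ofReal_re, Complex.I_re, Complex.I_im,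
        Complex.add_re]
      have h1 : Real.sin (θ - π/2) = -Real.cos θ := by
        have := Real.sin_pi_div_two_sub θ
        have h2 := Real.sin_neg (π/2 - θ)
        rw [← this]
        rw [show θ - π/2 = -(π/2 - θ) by ring, Real.sin_neg]
      have h2 : Real.sin (2*θ) = 2 * Real.sin θ * Real.cos θ := Real.sin_two_mul θ
      rw [h1, h2]; ring
  have hrpos : (0:ℝ) < 2 * Real.sin θ := by linarith
  have hmem : θ - π/2 ∈ Ioc (-π) π := by
    constructor
    · have := Real.pi_pos; linarith [hθ.1]
    · linarith [hθ.2, Real.pi_pos]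
  have harg : (1 - zz θ).arg = θ - π/2 := by
    rw [hfac]
    exact Complex.arg_mul_cos_add_sin_mul_I hrpos hmem
  have habs : ‖1 - zz θ‖ = 2 * Real.sin θ := by
    rw [hfac, norm_mul, Complex.norm_real, Real.norm_eq_abs, abs_of_pos hrpos, ← Complex.exp_mul_I,
      Complex.norm_exp_ofReal_mul_I, mul_one]
  rw [Complex.log, habs, harg]

lemma logsin_int_half : IntervalIntegrable (fun t => Real.log (Real.sin t)) volume 0 (π/2) := by
  have hpi2 : 0 < π/2 := by positivity
  rw [intervalIntegrable_iff_integrableOn_Ioc_of_le (le_of_lt hpi2)]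
  have hmaj : IntegrableOn (fun t : ℝ => Real.log (π/2) - Real.log t) (Ioc 0 (π/2)) volume := by
    apply Integrable.sub (integrable_const _)
    have := log_intervalIntegrable_zero hpi2
    rw [intervalIntegrable_iff_integrableOn_Ioc_of_le (le_of_lt hpi2)] at this
    exact this
  apply hmaj.mono' ((Real.measurable_log.comp Real.measurable_sin).aestronglyMeasurable.congr
    (Filter.Eventually.of_forall (fun t => rfl)))
  filter_upwards [ae_restrict_mem measurableSet_Ioc] with t ht
  have ht0 := ht.1
  have ht2 := ht.2
  have hsinpos : 0 < Real.sin t := Real.sin_pos_of_pos_of_lt_pi ht0 (by linarith [Real.pi_pos])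
  have hsinle : Real.sin t ≤ 1 := Real.sin_le_one t
  have hjordan : 2/π * t ≤ Real.sin t := Real.mul_le_sin (le_of_lt ht0) ht2
  have hπ : (0:ℝ) < π := Real.pi_pos
  have hlow : Real.log (2/π * t) ≤ Real.log (Real.sin t) :=
    Real.log_le_log (by positivity) hjordan
  have hup : Real.log (Real.sin t) ≤ 0 := Real.log_nonpos (le_of_lt hsinpos) hsinle
  show |Real.log (Real.sin t)| ≤ _
  rw [abs_of_nonpos hup]
  have hsplit : Real.log (2/π * t) = Real.log 2 - Real.log π + Real.log t := by
    rw [Real.log_mul (by positivity) (ne_of_gt ht0), Real.log_div (by norm_num) (ne_of_gt hπ)]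
  have hl2 : Real.log (π/2) = Real.log π - Real.log 2 := by
    rw [Real.log_div (ne_of_gt hπ) (by norm_num)]
  rw [hl2]
  rw [hsplit] at hlow
  linarith

lemma logsin_int : IntervalIntegrable (fun t => Real.log (Real.sin t)) volume 0 π := by
  apply logsin_int_half.trans
  have := logsin_int_half.comp_sub_left π
  have heq : (fun x : ℝ => Real.log (Real.sin (π - x))) = fun x => Real.log (Real.sin x) := by
    funext x; rw [Real.sin_pi_sub]
  rw [heq] at this
  have h2 := this.symm
  have heq2 : π - π/2 = π/2 := by ring
  rw [heq2] at h2
  simpa using h2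

lemma log2sin_int {θ : ℝ} (h0 : 0 ≤ θ) (h1 : θ ≤ π) :
    IntervalIntegrable (fun t => Real.log (2 * Real.sin t)) volume 0 θ := by
  have hsub : IntervalIntegrable (fun t => Real.log (Real.sin t)) volume 0 θ := by
    apply logsin_int.mono_set
    rw [uIcc_of_le h0, uIcc_of_le Real.pi_pos.le]
    exact Icc_subset_Icc le_rfl h1
  have : IntervalIntegrable (fun t => Real.log 2 + Real.log (Real.sin t)) volume 0 θ :=
    (intervalIntegrable_const).add hsub
  apply this.congr_ae
  rw [uIoc_of_le h0, ← Measure.restrict_congr_set Ioo_ae_eq_Ioc]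
  filter_upwards [ae_restrict_mem measurableSet_Ioo] with t ht
  have hsinpos : 0 < Real.sin t := Real.sin_pos_of_pos_of_lt_pi ht.1 (lt_of_lt_of_le ht.2 h1)
  rw [Real.log_mul two_ne_zero (ne_of_gt hsinpos)]


lemma hasSum_shift : HasSum (fun n : ℕ => 1 / ((n:ℝ) + 1) ^ 2) (π ^ 2 / 6) := by
  have h := hasSum_zeta_two
  rw [show (π ^ 2 / 6 : ℝ) = π ^ 2 / 6 + ∑ i ∈ Finset.range 1, 1 / (i:ℝ) ^ 2 by simp] at h
  have := (hasSum_nat_add_iff (f := fun n : ℕ => 1 / (n:ℝ) ^ 2) (g := π ^ 2 / 6) 1).2 h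
  simpa using this

lemma real_int : ∫ t in (0:ℝ)..1, Real.log (1 - t) / t = -(π ^ 2 / 6) := by
  rw [intervalIntegral.integral_of_le zero_le_one]
  have hae : ∀ᵐ t ∂(volume.restrict (Ioc (0:ℝ) 1)),
      Real.log (1 - t) / t = ∑' n : ℕ, -(t ^ n / (n + 1)) := by
    rw [← Measure.restrict_congr_set Ioo_ae_eq_Ioc]
    filter_upwards [ae_restrict_mem measurableSet_Ioo] with t ht
    have habs : |t| < 1 := by rw [abs_of_pos ht.1]; exact ht.2
    have h := Real.hasSum_pow_div_log_of_abs_lt_one habs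
    have h2 : HasSum (fun n : ℕ => t ^ (n+1) / (n + 1) / t) (-Real.log (1 - t) / t) :=
      h.div_const t
    have h3 : (fun n : ℕ => t ^ (n+1) / ((n:ℝ) + 1) / t) = fun n : ℕ => t ^ n / ((n:ℝ) + 1) := by
      funext n
      field_simp [ne_of_gt ht.1]
      ring
    rw [h3] at h2
    have h4 := h2.neg
    rw [show Real.log (1-t) / t = -(-Real.log (1 - t) / t) by ring]
    exact h4.tsum_eq.symm
  rw [integral_congr_ae hae]
  have key := MeasureTheory.integral_tsum_of_summable_integral_norm
    (μ := volume.restrict (Ioc (0:ℝ) 1))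
    (F := fun (n : ℕ) (t : ℝ) => -(t ^ n / ((n:ℝ) + 1))) ?_ ?_
  · rw [← key]
    have hint : ∀ n : ℕ, ∫ t in Ioc (0:ℝ) 1, -(t ^ n / ((n:ℝ) + 1)) = -(1 / ((n:ℝ)+1)^2) := by
      intro n
      rw [← intervalIntegral.integral_of_le zero_le_one]
      rw [intervalIntegral.integral_neg]
      congr 1
      rw [intervalIntegral.integral_div, integral_pow]
      rw [div_div, one_div]
      congr 1
      push_cast
      ring
    rw [tsum_congr (fun n => hint n)]
    rw [tsum_neg, hasSum_shift.tsum_eq]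
  · intro n
    apply Integrable.neg
    have hc : ContinuousOn (fun t : ℝ => t ^ n / ((n:ℝ) + 1)) (Icc (0:ℝ) 1) :=
      ((continuous_pow n).div_const _).continuousOn
    exact (hc.integrableOn_Icc).mono_set Ioc_subset_Icc_self
  · have hval : ∀ n : ℕ, (∫ t in Ioc (0:ℝ) 1, ‖-(t ^ n / ((n:ℝ) + 1))‖) = 1 / ((n:ℝ)+1)^2 := by
      intro n
      have : ∀ t ∈ Ioc (0:ℝ) 1, ‖-(t ^ n / ((n:ℝ) + 1))‖ = t ^ n / ((n:ℝ) + 1) := by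
        intro t ht
        rw [norm_neg, Real.norm_eq_abs, _root_.abs_of_nonneg]
        have h0 := ht.1
        positivity
      rw [setIntegral_congr_fun measurableSet_Ioc this]
      rw [← intervalIntegral.integral_of_le zero_le_one]
      rw [intervalIntegral.integral_div, integral_pow]
      rw [div_div, one_div]
      congr 1
      push_cast
      ring
    apply Summable.congr hasSum_shift.summable
    intro n
    rw [hval n]

lemma Li2_one : Li2 1 = (π:ℂ) ^ 2 / 6 := by
  rw [Li2]
  have hcongr : ∫ t in (0:ℝ)..1, Complex.log (1 - (t:ℂ) * 1) / t
      = ∫ t in (0:ℝ)..1, ((Real.log (1 - t) / t : ℝ) : ℂ) := by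
    apply intervalIntegral.integral_congr_ae
    rw [uIoc_of_le zero_le_one]
    filter_upwards [] with t
    intro ht
    have h1 : ((1:ℂ) - (t:ℂ) * 1) = ((1 - t : ℝ) : ℂ) := by push_cast; ring
    rw [h1, ← Complex.ofReal_log (by linarith [ht.2] : (0:ℝ) ≤ 1 - t), Complex.ofReal_div]
  rw [hcongr, intervalIntegral.integral_ofReal, real_int]
  push_cast
  ring

end Aux

open MeasureTheory Set Real in
/-- For `0 ≤ θ ≤ π`: `Li₂(e^{2iθ}) = π²/6 + θ(θ - π) + 2i·Λ(θ)`. -/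
theorem stmt7 (θ : ℝ) (h0 : 0 ≤ θ) (h1 : θ ≤ Real.pi) :
    Li2 (Complex.exp (2 * I * θ)) =
      (Real.pi : ℂ) ^ 2 / 6 + (θ : ℂ) * ((θ : ℂ) - Real.pi) + 2 * I * (Lob θ : ℂ) := by
  have hz : Complex.exp (2 * I * (θ:ℂ)) = zz θ := rfl
  rw [hz]
  set f' : ℝ → ℂ := fun t => -2 * I * Complex.log (1 - zz t) with hf'
  have hae : ∀ᵐ t ∂(volume.restrict (Set.uIoc (0:ℝ) θ)),
      f' t = ((2*t - π : ℝ) : ℂ) + (-2 * I) * ((Real.log (2 * Real.sin t) : ℝ) : ℂ) := by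
    rw [uIoc_of_le h0, ← Measure.restrict_congr_set Ioo_ae_eq_Ioc]
    filter_upwards [ae_restrict_mem measurableSet_Ioo] with t ht
    have htm : t ∈ Ioo 0 π := ⟨ht.1, lt_of_lt_of_le ht.2 h1⟩
    show -2 * I * Complex.log (1 - zz t) = _
    rw [log_polar htm]
    push_cast
    linear_combination ((π:ℂ) - 2*t) * Complex.I_sq
  have hint2 : IntervalIntegrable (fun t => (-2 * I) * ((Real.log (2 * Real.sin t) : ℝ) : ℂ))
      volume 0 θ := by
    apply IntervalIntegrable.const_mul
    have h := log2sin_int h0 h1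
    rw [intervalIntegrable_iff] at h ⊢
    exact h.ofReal
  have hint1 : IntervalIntegrable (fun t : ℝ => ((2*t - π : ℝ) : ℂ)) volume 0 θ := by
    apply Continuous.intervalIntegrable
    exact Complex.continuous_ofReal.comp (by continuity)
  have hinth : IntervalIntegrable
      (fun t => ((2*t - π : ℝ) : ℂ) + (-2 * I) * ((Real.log (2 * Real.sin t) : ℝ) : ℂ))
      volume 0 θ := hint1.add hint2
  have hint : IntervalIntegrable f' volume 0 θ := by
    apply hinth.congr_ae
    filter_upwards [hae] with t ht
    exact ht.symm
  have hFTC := intervalIntegral.integral_eq_sub_of_hasDeriv_right_of_le h0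
    (cont_f.continuousOn)
    (fun t ht => (hasDerivAt_f ⟨ht.1, lt_of_lt_of_le ht.2 h1⟩).hasDerivWithinAt)
    hint
  have hf0 : Li2 (zz 0) = (π:ℂ)^2/6 := by
    rw [show zz 0 = 1 by rw [zz]; simp]
    exact Li2_one
  have hval : ∫ t in (0:ℝ)..θ, f' t = ((θ^2 - π*θ : ℝ) : ℂ) + 2 * I * (Lob θ : ℂ) := by
    rw [intervalIntegral.integral_congr_ae ((ae_restrict_iff' measurableSet_uIoc).1 hae)]
    rw [intervalIntegral.integral_add hint1 hint2]
    have hA : ∫ t in (0:ℝ)..θ, ((2*t - π : ℝ) : ℂ) = ((θ^2 - π*θ : ℝ) : ℂ) := by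
      rw [intervalIntegral.integral_ofReal]
      congr 1
      rw [intervalIntegral.integral_sub (by apply Continuous.intervalIntegrable; continuity)
        (intervalIntegrable_const)]
      rw [intervalIntegral.integral_const_mul, integral_id, intervalIntegral.integral_const]
      simp
      ring
    have hB : ∫ t in (0:ℝ)..θ, (-2 * I) * ((Real.log (2 * Real.sin t) : ℝ) : ℂ)
        = 2 * I * (Lob θ : ℂ) := by
      rw [intervalIntegral.integral_const_mul, intervalIntegral.integral_ofReal]
      have : ∫ t in (0:ℝ)..θ, Real.log (2 * Real.sin t) = -Lob θ := by
        rw [Lob, neg_neg]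
        apply intervalIntegral.integral_congr_ae
        filter_upwards [] with t
        intro htm
        rw [uIoc_of_le h0] at htm
        have hsn : 0 ≤ Real.sin t :=
          Real.sin_nonneg_of_nonneg_of_le_pi (le_of_lt htm.1) (le_trans htm.2 h1)
        rw [_root_.abs_of_nonneg (by linarith)]
      rw [this]
      push_cast
      ring
    rw [hA, hB]
  have : Li2 (zz θ) = Li2 (zz 0) + ∫ t in (0:ℝ)..θ, f' t := by
    rw [hFTC]; ring
  rw [this, hf0, hval]
  push_cast
  ring
end

section
/- The Lobachevsky function Λ(θ) = −∫₀^θ log|2 sin t| dt is an odd function of period π: Λ(−θ) = −Λ(θ) and Λ(θ + π) = Λ(θ) for all real θ. -/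
namespace LobAux

open Real MeasureTheory intervalIntegral Set

noncomputable def f (t : ℝ) : ℝ := Real.log |2 * Real.sin t|

lemma f_even (t : ℝ) : f (-t) = f t := by
  simp [f, Real.sin_neg, abs_mul]

lemma f_per : Function.Periodic f Real.pi := fun t => by
  simp [f, Real.sin_add_pi, abs_mul]

lemma f_reflect (t : ℝ) : f (Real.pi - t) = f t := by
  simp [f, Real.sin_pi_sub]

lemma f_meas : Measurable f :=
  Real.measurable_log.comp ((measurable_const.mul Real.continuous_sin.measurable).abs)

lemma int_half : IntervalIntegrable f volume 0 (Real.pi / 2) := by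
  have hpi2 : (0:ℝ) ≤ Real.pi / 2 := by positivity
  rw [intervalIntegrable_iff, uIoc_of_le hpi2]
  set g : ℝ → ℝ := fun x => |Real.log 2| + Real.log (Real.pi / 2) + 2 * x ^ (-(1:ℝ)/2) with hgdef
  have hg : IntegrableOn g (Ioc 0 (Real.pi / 2)) volume := by
    refine MeasureTheory.Integrable.add ?_ ?_
    · exact integrableOn_const measure_Ioc_lt_top.ne
    · have h1 : IntervalIntegrable (fun x : ℝ => x ^ (-(1:ℝ)/2)) volume 0 (Real.pi / 2) :=
        intervalIntegral.intervalIntegrable_rpow' (by norm_num)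
      rw [intervalIntegrable_iff, uIoc_of_le hpi2] at h1
      exact h1.const_mul 2
  apply Integrable.mono' hg (f_meas.aestronglyMeasurable.restrict)
  rw [ae_restrict_iff' measurableSet_Ioc]
  refine Filter.Eventually.of_forall (fun x hx => ?_)
  obtain ⟨hx0, hx2⟩ := hx
  have hxpi : x < Real.pi := lt_of_le_of_lt hx2 (by linarith [Real.pi_pos])
  have hs : 0 < Real.sin x := Real.sin_pos_of_pos_of_lt_pi hx0 hxpi
  have hs1 : Real.sin x ≤ 1 := Real.sin_le_one x
  have hfx : f x = Real.log 2 + Real.log (Real.sin x) := by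
    rw [f, abs_of_pos (by positivity), Real.log_mul (by norm_num) hs.ne']
  have hlogs : Real.log (Real.sin x) ≤ 0 := Real.log_nonpos hs.le hs1
  -- lower bound on sin x :  (2/π) x ≤ sin x
  have hjordan : 2 / Real.pi * x ≤ Real.sin x := Real.mul_le_sin hx0.le hx2
  have hpos : (0:ℝ) < 2 / Real.pi * x := by
    have := Real.pi_pos; positivity
  have h1 : -Real.log (Real.sin x) ≤ Real.log (Real.pi / 2) - Real.log x := by
    have := Real.log_le_log hpos hjordan
    rw [Real.log_mul (ne_of_gt (by positivity)) hx0.ne'] at this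
    have h2pi : Real.log (2 / Real.pi) = -Real.log (Real.pi / 2) := by
      rw [show (2 / Real.pi) = (Real.pi / 2)⁻¹ by rw [inv_div], Real.log_inv]
    linarith [this, h2pi ▸ this]
  -- -log x ≤ 2 * x ^ (-(1/2))
  have h2 : -Real.log x ≤ 2 * x ^ (-(1:ℝ)/2) := by
    rcases le_or_gt x 1 with hx1 | hx1
    · have key := Real.abs_log_mul_self_rpow_lt x (1/2) hx0 hx1 (by norm_num)
      have hxr : (0:ℝ) < x ^ ((1:ℝ)/2) := Real.rpow_pos_of_pos hx0 _
      rw [abs_mul, abs_of_pos hxr] at key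
      have key2 : |Real.log x| < 2 / x ^ ((1:ℝ)/2) := by
        rw [lt_div_iff₀ hxr]
        calc |Real.log x| * x ^ ((1:ℝ)/2) < 1 / (1/2) := key
          _ = 2 := by norm_num
      have hrw : x ^ (-(1:ℝ)/2) = (x ^ ((1:ℝ)/2))⁻¹ := by
        rw [show (-(1:ℝ)/2) = -((1:ℝ)/2) by ring, Real.rpow_neg hx0.le]
      calc -Real.log x ≤ |Real.log x| := neg_le_abs _
        _ ≤ 2 / x ^ ((1:ℝ)/2) := key2.le
        _ = 2 * x ^ (-(1:ℝ)/2) := by rw [hrw, div_eq_mul_inv]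
    · have : 0 ≤ Real.log x := Real.log_nonneg hx1.le
      have : (0:ℝ) ≤ 2 * x ^ (-(1:ℝ)/2) := by positivity
      linarith
  have : ‖f x‖ ≤ g x := by
    rw [hfx, Real.norm_eq_abs]
    calc |Real.log 2 + Real.log (Real.sin x)| ≤ |Real.log 2| + |Real.log (Real.sin x)| :=
          abs_add_le _ _
      _ = |Real.log 2| + (-Real.log (Real.sin x)) := by rw [abs_of_nonpos hlogs]
      _ ≤ |Real.log 2| + (Real.log (Real.pi / 2) - Real.log x) := by linarith
      _ ≤ |Real.log 2| + (Real.log (Real.pi / 2) + 2 * x ^ (-(1:ℝ)/2)) := by linarith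
      _ = g x := by rw [hgdef]; ring
  exact this

lemma int_second : IntervalIntegrable f volume (Real.pi / 2) Real.pi := by
  have h := (int_half.comp_sub_left Real.pi).symm
  have he : (fun x : ℝ => f (Real.pi - x)) = f := funext f_reflect
  rw [he] at h
  simpa [sub_half] using h

lemma int_zero_pi : IntervalIntegrable f volume 0 Real.pi :=
  int_half.trans int_second

lemma int_block (n : ℤ) : IntervalIntegrable f volume (n * Real.pi) (n * Real.pi + Real.pi) := by
  have h := int_zero_pi.comp_sub_right ((n : ℝ) * Real.pi)
  have he : (fun x : ℝ => f (x - (n : ℝ) * Real.pi)) = f :=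
    funext fun x => f_per.sub_int_mul_eq n
  rw [he] at h
  simpa [zero_add, add_comm] using h

lemma int_sym (n : ℕ) :
    IntervalIntegrable f volume (-((n : ℝ) * Real.pi)) ((n : ℝ) * Real.pi) := by
  induction n with
  | zero =>
    simp only [Nat.cast_zero, zero_mul, neg_zero]
    rw [intervalIntegrable_iff]
    simp
  | succ n ih =>
    have hleft := int_block (-(n + 1) : ℤ)
    have hright := int_block (n : ℤ)
    have e1 : ((-(n + 1) : ℤ) : ℝ) * Real.pi = -(((n : ℝ) + 1) * Real.pi) := by push_cast; ring
    have e2 : ((-(n + 1) : ℤ) : ℝ) * Real.pi + Real.pi = -((n : ℝ) * Real.pi) := by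
      push_cast; ring
    have e3 : ((n : ℤ) : ℝ) * Real.pi = (n : ℝ) * Real.pi := by push_cast; ring
    have e4 : ((n : ℤ) : ℝ) * Real.pi + Real.pi = ((n : ℝ) + 1) * Real.pi := by push_cast; ring
    rw [e1] at hleft
    have e2' : -(((n : ℝ) + 1) * Real.pi) + Real.pi = -((n : ℝ) * Real.pi) := by ring
    rw [e2'] at hleft
    rw [e3] at hright
    have e4' : (n : ℝ) * Real.pi + Real.pi = ((n : ℝ) + 1) * Real.pi := by ring
    rw [e4'] at hright
    have h := (hleft.trans ih).trans hright
    have egoal : ((n : ℝ) + 1) = (((n + 1 : ℕ)) : ℝ) := by push_cast; ring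
    rw [egoal] at h
    exact h

lemma int_all (a b : ℝ) : IntervalIntegrable f volume a b := by
  obtain ⟨n, hn⟩ := exists_nat_ge (max |a| |b|)
  have hpi1 : (1:ℝ) ≤ Real.pi := by linarith [Real.pi_gt_three]
  have hnpi : (n : ℝ) ≤ (n : ℝ) * Real.pi := by
    nlinarith [Nat.cast_nonneg (α := ℝ) n]
  have hmem : ∀ x : ℝ, |x| ≤ max |a| |b| →
      x ∈ Set.uIcc (-((n : ℝ) * Real.pi)) ((n : ℝ) * Real.pi) := by
    intro x hx
    have hx2 : |x| ≤ (n : ℝ) * Real.pi := le_trans hx (le_trans hn hnpi)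
    obtain ⟨h1, h2⟩ := abs_le.mp hx2
    rw [Set.uIcc_of_le (by linarith)]
    exact ⟨h1, h2⟩
  refine (int_sym n).mono_set ?_
  exact Set.uIcc_subset_uIcc (hmem a (le_max_left _ _)) (hmem b (le_max_right _ _))

lemma f_cos (t : ℝ) : f (Real.pi / 2 - t) = Real.log |2 * Real.cos t| := by
  simp [f, Real.sin_pi_div_two_sub]

lemma int_cos : IntervalIntegrable (fun x => f (Real.pi / 2 - x)) volume 0 (Real.pi / 2) := by
  have h := (int_half.comp_sub_left (Real.pi / 2)).symm
  simpa using h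

lemma J_zero : (∫ t in (0:ℝ)..Real.pi, f t) = 0 := by
  set I := ∫ t in (0:ℝ)..(Real.pi / 2), f t with hI
  set J := ∫ t in (0:ℝ)..Real.pi, f t with hJ
  -- second half equals I
  have hsecond : (∫ t in (Real.pi / 2)..Real.pi, f t) = I := by
    have h := integral_comp_sub_left f Real.pi (a := 0) (b := Real.pi / 2)
    simp only [f_reflect] at h
    rw [hI, h, sub_zero, sub_half]
  have hJ2I : J = 2 * I := by
    have := integral_add_adjacent_intervals int_half int_second
    rw [hsecond] at this
    rw [hJ, ← this, hI]; ring
  -- double angle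
  have hdouble : (∫ x in (0:ℝ)..(Real.pi / 2), f (2 * x)) = 2⁻¹ * J := by
    have h := integral_comp_mul_left f (c := 2) (a := 0) (b := Real.pi / 2) two_ne_zero
    rw [h, show (2:ℝ) * 0 = 0 by ring, show (2:ℝ) * (Real.pi / 2) = Real.pi by ring]
    rw [hJ, smul_eq_mul]
  have hae : (∫ x in (0:ℝ)..(Real.pi / 2), f (2 * x)) =
      ∫ x in (0:ℝ)..(Real.pi / 2), (f x + f (Real.pi / 2 - x)) := by
    apply intervalIntegral.integral_congr_ae
    have hne : ∀ᵐ x : ℝ, x ≠ Real.pi / 2 := by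
      rw [MeasureTheory.ae_iff]
      have : {x : ℝ | ¬x ≠ Real.pi / 2} = {Real.pi / 2} := by
        ext y; simp
      rw [this]
      exact measure_singleton _
    filter_upwards [hne] with x hxne hx
    rw [Set.uIoc_of_le (by positivity)] at hx
    obtain ⟨hx0, hx2⟩ := hx
    have hx2' : x < Real.pi / 2 := lt_of_le_of_ne hx2 hxne
    have hs : 0 < Real.sin x :=
      Real.sin_pos_of_pos_of_lt_pi hx0 (by linarith [Real.pi_pos])
    have hc : 0 < Real.cos x := Real.cos_pos_of_mem_Ioo ⟨by linarith [Real.pi_pos], hx2'⟩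
    have habs : |2 * Real.sin (2 * x)| = |2 * Real.sin x| * |2 * Real.cos x| := by
      rw [Real.sin_two_mul, ← abs_mul]
      ring_nf
    rw [f, habs, Real.log_mul (by positivity) (by positivity), f_cos]
    rfl
  have hsum : (∫ x in (0:ℝ)..(Real.pi / 2), (f x + f (Real.pi / 2 - x))) = 2 * I := by
    rw [integral_add int_half int_cos]
    have h := integral_comp_sub_left f (Real.pi / 2) (a := 0) (b := Real.pi / 2)
    rw [h, sub_self, sub_zero, ← hI]
    ring
  have : 2⁻¹ * J = 2 * I := by rw [← hdouble, hae, hsum]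
  -- J = 2I and J/2 = 2I, so J = 0
  rw [hJ2I] at this ⊢
  linarith

end LobAux

/-- The Lobachevsky function is odd and `π`-periodic:
`Λ(-θ) = -Λ(θ)` and `Λ(θ + π) = Λ(θ)` for all real `θ`. -/
theorem stmt8 : ∀ θ : ℝ, Lob (-θ) = -Lob θ ∧ Lob (θ + Real.pi) = Lob θ := by
  intro θ
  have hLob : ∀ t : ℝ, Lob t = -∫ x in (0:ℝ)..t, LobAux.f x := fun t => rfl
  constructor
  · -- oddness
    have h := intervalIntegral.integral_comp_neg (a := (0:ℝ)) (b := θ) LobAux.f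
    simp only [LobAux.f_even] at h
    have h2 : (∫ x in (0:ℝ)..(-θ), LobAux.f x) = -∫ x in (0:ℝ)..θ, LobAux.f x := by
      rw [h, neg_zero, intervalIntegral.integral_symm]
    rw [hLob, hLob, h2, neg_neg]
  · -- periodicity
    have hsplit := intervalIntegral.integral_add_adjacent_intervals
      (LobAux.int_all 0 θ) (LobAux.int_all θ (θ + Real.pi))
    have hper := LobAux.f_per.intervalIntegral_add_eq θ 0
    simp only [zero_add] at hper
    rw [hLob, hLob, ← hsplit, hper, LobAux.J_zero, add_zero]
end
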